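/- arXiv:2312.06296 — 7 statements merged into one kernel-verified Lean document; each statement's English description precedes it below -/
import Mathlib

section
/- Let t : Fin n → A × B with n ≥ 2 model a bag relation, let K be the number of distinct X-values of t (the cardinality of the image of i ↦ (t i).1), and let pdepY := Σ_b p₂(b)². Then the average of pdep(t_σ) over all n! permutations σ of Fin n equals pdepY + ((K−1)/(n−1))·(1 − pdepY). (Expected value of probabilistic dependency under random (X;Y)-permutations, Piatetsky-Shapiro–Matheus.) -/
namespace AFD

open Finset

variable {A B : Type*}

/-- Number of indices with X-value `a`. -/
def c1 {n : ℕ} [DecidableEq A] (t : Fin n → A × B) (a : A) : ℕ :=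
  (Finset.univ.filter fun i => (t i).1 = a).card

/-- Number of indices with Y-value `b`. -/
def c2 {n : ℕ} [DecidableEq B] (t : Fin n → A × B) (b : B) : ℕ :=
  (Finset.univ.filter fun i => (t i).2 = b).card

/-- Number of indices with tuple value `(a, b)`. -/
def cnt {n : ℕ} [DecidableEq A] [DecidableEq B] (t : Fin n → A × B) (a : A) (b : B) : ℕ :=
  (Finset.univ.filter fun i => t i = (a, b)).card

/-- Marginal probability of X-value `a`. -/
noncomputable def p1 {n : ℕ} [DecidableEq A] (t : Fin n → A × B) (a : A) : ℝ :=
  (c1 t a : ℝ) / n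

/-- Marginal probability of Y-value `b`. -/
noncomputable def p2 {n : ℕ} [DecidableEq B] (t : Fin n → A × B) (b : B) : ℝ :=
  (c2 t b : ℝ) / n

/-- Joint probability of `(a, b)`. -/
noncomputable def pJ {n : ℕ} [DecidableEq A] [DecidableEq B] (t : Fin n → A × B)
    (a : A) (b : B) : ℝ :=
  (cnt t a b : ℝ) / n

/-- Conditional probability of Y-value `b` given X-value `a` (with the `0/0 = 0` convention,
which is automatic for real division in Lean). -/
noncomputable def pC {n : ℕ} [DecidableEq A] [DecidableEq B] (t : Fin n → A × B)
    (a : A) (b : B) : ℝ :=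
  pJ t a b / p1 t a

/-- The set of distinct X-values. -/
def domX {n : ℕ} [DecidableEq A] (t : Fin n → A × B) : Finset A :=
  Finset.univ.image fun i => (t i).1

/-- The set of distinct Y-values. -/
def domY {n : ℕ} [DecidableEq B] (t : Fin n → A × B) : Finset B :=
  Finset.univ.image fun i => (t i).2

/-- The set of distinct tuples. -/
def domXY {n : ℕ} [DecidableEq A] [DecidableEq B] (t : Fin n → A × B) : Finset (A × B) :=
  Finset.univ.image t

/-- The probabilistic dependency `pdep(X → Y)`. -/
noncomputable def pdep {n : ℕ} [DecidableEq A] [DecidableEq B] (t : Fin n → A × B) : ℝ :=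
  ∑ a ∈ domX t, p1 t a * ∑ b ∈ domY t, (pC t a b) ^ 2

/-- The probabilistic self-dependency `pdep(Y)`. -/
noncomputable def pdepY {n : ℕ} [DecidableEq B] (t : Fin n → A × B) : ℝ :=
  ∑ b ∈ domY t, (p2 t b) ^ 2

/-- The (X;Y)-permutation of `t` induced by the permutation `σ`. -/
def permRel {n : ℕ} (t : Fin n → A × B) (σ : Equiv.Perm (Fin n)) : Fin n → A × B :=
  fun i => ((t i).1, (t (σ i)).2)

/-- `t` satisfies the functional dependency X → Y. -/
def satFD {n : ℕ} (t : Fin n → A × B) : Prop :=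
  ∀ i j, (t i).1 = (t j).1 → (t i).2 = (t j).2

/-! For a uniformly random permutation `σ`, the cell count `cnt (permRel t σ) a b` is
`#{i ∈ S_a | σ i ∈ T_b}` with `S_a`, `T_b` the X- and Y-fibres: a hypergeometric variable. Its
second moment follows from two facts: `σ i` is uniform on `Fin n`, and for `i ≠ j` the pair
`(σ i, σ j)` is uniform on the ordered pairs of distinct points. As the marginals `c1`, `c2` do not
depend on `σ` and `pdep = Σ_{a,b} cnt² / (n c1)`, the average of `pdep` is a sum of these second
moments, and summing them over `b` and then `a` with `Σ c2 = Σ c1 = n` gives the formula. -/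

open Equiv
open scoped Nat

section PermutationCounting

variable {α : Type*} [Fintype α] [DecidableEq α]

theorem card_perm_apply_eq (i x : α) :
    #{σ : Perm α | σ i = x} = (Fintype.card α - 1)! := by
  have hfiber (y : α) : #{σ : Perm α | σ i = y} = #{σ : Perm α | σ i = x} :=
    card_nbij' (swap x y * ·) (swap x y * ·) (fun σ hσ => by simp_all)
      (fun σ hσ => by simp_all) (fun σ _ => swap_mul_self_mul x y σ)
      (fun σ _ => swap_mul_self_mul x y σ)
  have hsum := card_eq_sum_card_fiberwise (s := univ) (t := univ)
    (f := fun σ : Perm α => σ i) (fun _ _ => mem_univ _)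
  simp only [hfiber, sum_const, Finset.card_univ, Fintype.card_perm, smul_eq_mul] at hsum
  have hpos : 0 < Fintype.card α := Fintype.card_pos_iff.mpr ⟨i⟩
  rw [← Nat.mul_factorial_pred hpos.ne'] at hsum
  exact (Nat.eq_of_mul_eq_mul_left hpos hsum).symm

theorem card_perm_apply_eq_and_apply_eq {i j x y : α} (hij : i ≠ j) (hxy : x ≠ y) :
    #{σ : Perm α | σ i = x ∧ σ j = y} = (Fintype.card α - 2)! := by
  have hfiber (z : α) (hz : z ≠ x) :
      #{σ : Perm α | σ i = x ∧ σ j = z} = #{σ : Perm α | σ i = x ∧ σ j = y} :=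
    card_nbij' (swap y z * ·) (swap y z * ·)
      (fun σ hσ => by simp_all [swap_apply_of_ne_of_ne hxy hz.symm])
      (fun σ hσ => by simp_all [swap_apply_of_ne_of_ne hxy hz.symm])
      (fun σ _ => swap_mul_self_mul y z σ) (fun σ _ => swap_mul_self_mul y z σ)
  have hdiag : #{σ : Perm α | σ i = x ∧ σ j = x} = 0 := by
    simp only [card_eq_zero, filter_eq_empty_iff]
    rintro σ - ⟨hi, hj⟩
    exact hij (σ.injective (hi.trans hj.symm))
  -- split `{σ | σ i = x}` by the value of `σ j`: it is never `x`, and the other values are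
  -- equally frequent
  have hsum := card_eq_sum_card_fiberwise (s := {σ : Perm α | σ i = x}) (t := univ)
    (f := fun σ : Perm α => σ j) (fun _ _ => mem_univ _)
  simp only [filter_filter] at hsum
  rw [card_perm_apply_eq, ← sum_erase_add _ _ (mem_univ x), hdiag, add_zero,
    sum_congr rfl fun z hz => hfiber z (ne_of_mem_erase hz), sum_const, smul_eq_mul,
    card_erase_of_mem (mem_univ x), Finset.card_univ] at hsum
  have hpos : 0 < Fintype.card α - 1 :=
    Nat.sub_pos_of_lt (Fintype.one_lt_card_iff.mpr ⟨i, j, hij⟩)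
  rw [← Nat.mul_factorial_pred hpos.ne'] at hsum
  exact (Nat.eq_of_mul_eq_mul_left hpos hsum).symm

theorem sum_perm_apply {M : Type*} [AddCommMonoid M] (f : α → M) (i : α) :
    ∑ σ : Perm α, f (σ i) = (Fintype.card α - 1)! • ∑ x, f x := by
  rw [← sum_fiberwise' univ (fun σ : Perm α => σ i), smul_sum]
  simp only [sum_const, card_perm_apply_eq]

theorem sum_perm_apply_apply {M : Type*} [AddCommMonoid M] (g : α → α → M) {i j : α}
    (hij : i ≠ j) :
    ∑ σ : Perm α, g (σ i) (σ j) = (Fintype.card α - 2)! • ∑ p ∈ univ.offDiag, g p.1 p.2 := by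
  have hmaps : ∀ σ ∈ (univ : Finset (Perm α)), (σ i, σ j) ∈ univ.offDiag := fun σ _ => by
    simp [σ.injective.ne hij]
  rw [← sum_fiberwise_of_maps_to' hmaps fun p => g p.1 p.2, smul_sum]
  refine sum_congr rfl fun p hp => ?_
  simp only [Prod.ext_iff, sum_const]
  rw [card_perm_apply_eq_and_apply_eq hij (mem_offDiag.mp hp).2.2]

theorem sum_perm_card_filter_sq (S T : Finset α) :
    ∑ σ : Perm α, #{i ∈ S | σ i ∈ T} ^ 2 =
      (Fintype.card α - 1)! * (#S * #T) + (Fintype.card α - 2)! * (#S.offDiag * #T.offDiag) := by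
  -- expand the square over ordered pairs of `S`; the diagonal gives the first moment
  have hsq (σ : Perm α) : #{i ∈ S | σ i ∈ T} ^ 2 =
      ∑ p ∈ S.diag ∪ S.offDiag, if σ p.1 ∈ T ∧ σ p.2 ∈ T then 1 else 0 := by
    rw [sq, ← card_product, ← filter_product, diag_union_offDiag, card_filter]
  have hT : ∑ p ∈ univ.offDiag, (if p.1 ∈ T ∧ p.2 ∈ T then 1 else 0) = #T.offDiag := by
    rw [← card_filter]
    congr 1
    ext p
    simp only [mem_filter, mem_offDiag, mem_univ, true_and]
    tauto
  simp only [hsq, sum_union (disjoint_diag_offDiag S), sum_diag, and_self, sum_add_distrib]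
  rw [sum_comm, sum_comm (t := S.offDiag), sum_congr rfl fun i _ => sum_perm_apply (fun x => if x ∈ T then 1 else 0) i,
    sum_congr rfl fun p hp => sum_perm_apply_apply (fun x y => if x ∈ T ∧ y ∈ T then 1 else 0)
      (mem_offDiag.mp hp).2.2, hT]
  simp only [sum_ite_mem, univ_inter, sum_const, smul_eq_mul, mul_one]
  ring

end PermutationCounting

lemma cast_factorial_sub_one {n : ℕ} (hn : 2 ≤ n) :
    ((n - 1)! : ℝ) = ((n : ℝ) - 1) * (n - 2)! := by
  obtain ⟨m, rfl⟩ : ∃ m, n = m + 2 := ⟨n - 2, by omega⟩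
  rw [show m + 2 - 1 = m + 1 by omega, show m + 2 - 2 = m by omega, Nat.factorial_succ]
  push_cast
  ring

lemma sum_c1 {n : ℕ} [DecidableEq A] (t : Fin n → A × B) : ∑ a ∈ domX t, c1 t a = n :=
  (card_eq_sum_card_image _ univ).symm.trans (card_fin n)

lemma sum_c2 {n : ℕ} [DecidableEq B] (t : Fin n → A × B) : ∑ b ∈ domY t, c2 t b = n :=
  (card_eq_sum_card_image _ univ).symm.trans (card_fin n)

lemma domX_permRel {n : ℕ} [DecidableEq A] (t : Fin n → A × B) (σ : Equiv.Perm (Fin n)) :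
    domX (permRel t σ) = domX t := rfl

lemma c1_permRel {n : ℕ} [DecidableEq A] (t : Fin n → A × B) (σ : Equiv.Perm (Fin n)) :
    c1 (permRel t σ) = c1 t := rfl

lemma domY_permRel {n : ℕ} [DecidableEq B] (t : Fin n → A × B) (σ : Equiv.Perm (Fin n)) :
    domY (permRel t σ) = domY t := by
  conv_rhs => rw [domY, ← image_univ_equiv σ, image_image]
  rfl

lemma cnt_permRel {n : ℕ} [DecidableEq A] [DecidableEq B] (t : Fin n → A × B)
    (σ : Equiv.Perm (Fin n)) (a : A) (b : B) :
    cnt (permRel t σ) a b = #{i ∈ {i | (t i).1 = a} | σ i ∈ {j | (t j).2 = b}} := by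
  simp only [cnt, permRel, filter_filter, Prod.ext_iff]
  rfl

lemma sum_cnt_permRel_sq {n : ℕ} [DecidableEq A] [DecidableEq B] (t : Fin n → A × B)
    (a : A) (b : B) :
    ∑ σ : Equiv.Perm (Fin n), (cnt (permRel t σ) a b : ℝ) ^ 2 =
      (n - 1)! * (c1 t a * c2 t b) +
        (n - 2)! * (((c1 t a : ℝ) ^ 2 - c1 t a) * ((c2 t b : ℝ) ^ 2 - c2 t b)) := by
  have h := sum_perm_card_filter_sq {i | (t i).1 = a} {j | (t j).2 = b}
  simp only [offDiag_card, Fintype.card_fin] at h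
  have h' := congrArg (Nat.cast : ℕ → ℝ) h
  push_cast [Nat.cast_sub (Nat.le_mul_self _)] at h'
  simpa [cnt_permRel, c1, c2, sq] using h'

lemma pdep_eq_sum_cnt_sq {n : ℕ} [DecidableEq A] [DecidableEq B] (t : Fin n → A × B) :
    pdep t = ∑ a ∈ domX t, ∑ b ∈ domY t, (cnt t a b : ℝ) ^ 2 / (n * c1 t a) := by
  refine sum_congr rfl fun a _ => ?_
  rw [mul_sum]
  refine sum_congr rfl fun b _ => ?_
  simp only [pC, pJ, p1]
  rcases eq_or_ne (n : ℝ) 0 with hn | hn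
  · simp [hn]
  rcases eq_or_ne (c1 t a : ℝ) 0 with hc | hc
  · simp [hc]
  field_simp

lemma pdepY_eq_sum_c2_sq_div {n : ℕ} [DecidableEq B] (t : Fin n → A × B) :
    pdepY t = (∑ b ∈ domY t, (c2 t b : ℝ) ^ 2) / n ^ 2 := by
  simp only [pdepY, p2, div_pow, sum_div]

lemma sum_perm_sum_cnt_permRel_sq_div {n : ℕ} [DecidableEq A] [DecidableEq B] (hn : 2 ≤ n)
    (t : Fin n → A × B) {a : A} (ha : a ∈ domX t) :
    ∑ σ : Equiv.Perm (Fin n), ∑ b ∈ domY t, (cnt (permRel t σ) a b : ℝ) ^ 2 / (n * c1 t a) =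
      (n - 2)! * (n - 1 + (c1 t a - 1) * (n * pdepY t - 1)) := by
  have hn0 : (n : ℝ) ≠ 0 := by positivity
  have hc1 : (c1 t a : ℝ) ≠ 0 := by
    obtain ⟨i, -, hi⟩ := mem_image.mp ha
    exact Nat.cast_ne_zero.mpr (card_ne_zero_of_mem (mem_filter.mpr ⟨mem_univ i, hi⟩))
  have hc2 : ∑ b ∈ domY t, (c2 t b : ℝ) = n := by exact_mod_cast sum_c2 t
  have hterm (b : B) : (∑ σ : Equiv.Perm (Fin n), (cnt (permRel t σ) a b : ℝ) ^ 2) / (n * c1 t a)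
      = (n - 2)! / n * ((n - 1) * c2 t b + (c1 t a - 1) * ((c2 t b : ℝ) ^ 2 - c2 t b)) := by
    rw [sum_cnt_permRel_sq, cast_factorial_sub_one hn]
    field_simp
  rw [sum_comm, sum_congr rfl fun b _ => (sum_div _ _ _).symm, sum_congr rfl fun b _ => hterm b,
    ← mul_sum, sum_add_distrib, ← mul_sum, ← mul_sum, sum_sub_distrib, hc2, pdepY_eq_sum_c2_sq_div]
  field_simp

lemma sum_pdep_permRel {n : ℕ} [DecidableEq A] [DecidableEq B] (hn : 2 ≤ n)
    (t : Fin n → A × B) :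
    ∑ σ : Equiv.Perm (Fin n), pdep (permRel t σ) =
      (n - 2)! * (#(domX t) * (n - 1) + (n - #(domX t)) * (n * pdepY t - 1)) := by
  have hc1 : ∑ a ∈ domX t, (c1 t a : ℝ) = n := by exact_mod_cast sum_c1 t
  simp only [pdep_eq_sum_cnt_sq, domX_permRel, domY_permRel, c1_permRel]
  rw [sum_comm, sum_congr rfl fun a ha => sum_perm_sum_cnt_permRel_sq_div hn t ha, ← mul_sum,
    sum_add_distrib, ← sum_mul, sum_sub_distrib, sum_sub_distrib, hc1]
  simp only [sum_const, nsmul_eq_mul, mul_one]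
  ring

/-- Expected value of probabilistic dependency under random (X;Y)-permutations
(Piatetsky-Shapiro–Matheus). -/
theorem expected_pdep_under_permutations {A B : Type*} [DecidableEq A] [DecidableEq B]
    {n : ℕ} (hn : 2 ≤ n) (t : Fin n → A × B) :
    (∑ σ : Equiv.Perm (Fin n), pdep (permRel t σ)) / (n.factorial : ℝ) =
      pdepY t + (((domX t).card : ℝ) - 1) / ((n : ℝ) - 1) * (1 - pdepY t) := by
  have hn1 : (n : ℝ) - 1 ≠ 0 := by
    have : (2 : ℝ) ≤ n := by exact_mod_cast hn
    linarith
  rw [sum_pdep_permRel hn, ← Nat.mul_factorial_pred (show n ≠ 0 by omega), Nat.cast_mul,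
    cast_factorial_sub_one hn]
  field_simp
  ring

end AFD
end

section
/- Let t : Fin n → A × B with n ≥ 1 model a bag relation. If the average of pdep(t_σ) over all n! permutations σ of Fin n equals 1, then t satisfies the FD X→Y. (Well-definedness of the measure μ.) -/
namespace AFD

open Finset

variable {A B : Type*}

/-! Every `pdep` is at most `1`: it is an average over `a` of `Σ_b p(b∣a)²`, and each such sum is
at most `Σ_b p(b∣a) ≤ 1`. If `t` violates the FD, some `p(b∣a)` lies strictly between `0` and `1`,
so `pdep t < 1`. An average of numbers `≤ 1` equals `1` only if all of them do, in particular
`pdep (permRel t 1) = pdep t = 1`. -/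

theorem sum_sq_le_sum_of_mem_Icc {ι : Type*} (s : Finset ι) {x : ι → ℝ}
    (hx : ∀ i ∈ s, x i ∈ Set.Icc 0 1) : ∑ i ∈ s, x i ^ 2 ≤ ∑ i ∈ s, x i :=
  sum_le_sum fun i hi => sq_le (hx i hi).1 (hx i hi).2

theorem sum_sq_lt_sum_of_mem_Icc {ι : Type*} {s : Finset ι} {x : ι → ℝ}
    (hx : ∀ i ∈ s, x i ∈ Set.Icc 0 1) {j : ι} (hj : j ∈ s) (hj₀ : 0 < x j) (hj₁ : x j < 1) :
    ∑ i ∈ s, x i ^ 2 < ∑ i ∈ s, x i :=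
  sum_lt_sum (fun i hi => sq_le (hx i hi).1 (hx i hi).2)
    ⟨j, hj, pow_lt_self_of_lt_one₀ hj₀ hj₁ one_lt_two⟩

variable {n : ℕ} (t : Fin n → A × B)

theorem permRel_one : permRel t 1 = t := rfl

section Marginal

variable [DecidableEq A]

theorem mem_domX (i : Fin n) : (t i).1 ∈ domX t :=
  mem_image_of_mem _ (mem_univ i)

theorem sum_c1_domX : ∑ a ∈ domX t, c1 t a = n := by
  simpa [c1] using (card_eq_sum_card_fiberwise (s := univ) fun i _ => mem_domX t i).symm

theorem p1_nonneg (a : A) : 0 ≤ p1 t a := by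
  unfold p1; positivity

theorem p1_pos (i : Fin n) : 0 < p1 t (t i).1 := by
  have hc : 0 < c1 t (t i).1 := card_pos.mpr ⟨i, by simp⟩
  have hn : (0 : ℝ) < n := by exact_mod_cast i.pos
  unfold p1
  positivity

theorem sum_p1_le_one : ∑ a ∈ domX t, p1 t a ≤ 1 := by
  simp only [p1]
  rw [← sum_div, ← Nat.cast_sum, sum_c1_domX]
  exact div_self_le_one _

end Marginal

theorem mem_domY [DecidableEq B] (i : Fin n) : (t i).2 ∈ domY t :=
  mem_image_of_mem _ (mem_univ i)

variable [DecidableEq A] [DecidableEq B]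

theorem sum_cnt_domY (a : A) : ∑ b ∈ domY t, cnt t a b = c1 t a := by
  rw [c1, card_eq_sum_card_fiberwise fun i _ => mem_domY t i]
  refine sum_congr rfl fun b _ => ?_
  rw [cnt, filter_filter]
  simp only [Prod.ext_iff]

theorem cnt_le_c1 (a : A) (b : B) : cnt t a b ≤ c1 t a :=
  card_le_card <| monotone_filter_right _ fun i _ (hi : t i = (a, b)) => by simp [hi]

theorem cnt_lt_c1 {i j : Fin n} (hX : (t i).1 = (t j).1) (hY : (t i).2 ≠ (t j).2) :
    cnt t (t i).1 (t i).2 < c1 t (t i).1 := by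
  refine card_lt_card <| (ssubset_iff_of_subset ?_).2 ⟨j, by simp [hX], ?_⟩
  · exact monotone_filter_right _ fun k _ (hk : t k = _) => by simp [hk]
  · simpa [Prod.ext_iff, hX] using hY.symm

theorem sum_pJ_domY (a : A) : ∑ b ∈ domY t, pJ t a b = p1 t a := by
  simp only [pJ, p1]
  rw [← sum_div, ← Nat.cast_sum, sum_cnt_domY]

theorem sum_pC_le_one (a : A) : ∑ b ∈ domY t, pC t a b ≤ 1 := by
  simp only [pC]
  rw [← sum_div, sum_pJ_domY]
  exact div_self_le_one _

theorem pC_mem_Icc (a : A) (b : B) : pC t a b ∈ Set.Icc 0 1 := by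
  refine ⟨by unfold pC pJ p1; positivity, div_le_one_of_le₀ ?_ (p1_nonneg t a)⟩
  unfold pJ p1
  gcongr
  exact_mod_cast cnt_le_c1 t a b

theorem pC_pos (i : Fin n) : 0 < pC t (t i).1 (t i).2 := by
  have hc : 0 < cnt t (t i).1 (t i).2 := card_pos.mpr ⟨i, by simp⟩
  exact div_pos (div_pos (by exact_mod_cast hc) (by exact_mod_cast i.pos)) (p1_pos t i)

theorem pC_lt_one {i j : Fin n} (hX : (t i).1 = (t j).1) (hY : (t i).2 ≠ (t j).2) :
    pC t (t i).1 (t i).2 < 1 := by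
  rw [pC, div_lt_one (p1_pos t i), pJ, p1]
  gcongr
  · exact_mod_cast i.pos
  · exact_mod_cast cnt_lt_c1 t hX hY

theorem sum_pC_sq_le_one (a : A) : ∑ b ∈ domY t, pC t a b ^ 2 ≤ 1 :=
  (sum_sq_le_sum_of_mem_Icc _ fun b _ => pC_mem_Icc t a b).trans (sum_pC_le_one t a)

theorem sum_pC_sq_lt_one {i j : Fin n} (hX : (t i).1 = (t j).1) (hY : (t i).2 ≠ (t j).2) :
    ∑ b ∈ domY t, pC t (t i).1 b ^ 2 < 1 :=
  (sum_sq_lt_sum_of_mem_Icc (fun b _ => pC_mem_Icc t _ b) (mem_domY t i) (pC_pos t i)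
    (pC_lt_one t hX hY)).trans_le (sum_pC_le_one t _)

theorem pdep_le_one : pdep t ≤ 1 :=
  calc pdep t ≤ ∑ a ∈ domX t, p1 t a * 1 :=
        sum_le_sum fun a _ =>
          mul_le_mul_of_nonneg_left (sum_pC_sq_le_one t a) (p1_nonneg t a)
    _ ≤ 1 := by simpa using sum_p1_le_one t

theorem pdep_lt_one_of_not_satFD (hFD : ¬ satFD t) : pdep t < 1 := by
  obtain ⟨i, j, hX, hY⟩ : ∃ i j, (t i).1 = (t j).1 ∧ (t i).2 ≠ (t j).2 := by
    simpa [satFD] using hFD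
  calc pdep t < ∑ a ∈ domX t, p1 t a * 1 :=
        sum_lt_sum
          (fun a _ => mul_le_mul_of_nonneg_left (sum_pC_sq_le_one t a) (p1_nonneg t a))
          ⟨_, mem_domX t i, mul_lt_mul_of_pos_left (sum_pC_sq_lt_one t hX hY) (p1_pos t i)⟩
    _ ≤ 1 := by simpa using sum_p1_le_one t

theorem satFD_of_pdep_eq_one (h : pdep t = 1) : satFD t :=
  by_contra fun hFD => (pdep_lt_one_of_not_satFD t hFD).ne h

theorem satFD_of_expected_pdep_eq_one_general {A B : Type*} [DecidableEq A] [DecidableEq B]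
    {n : ℕ} (t : Fin n → A × B)
    (h : (∑ σ : Equiv.Perm (Fin n), pdep (permRel t σ)) / (n.factorial : ℝ) = 1) :
    satFD t := by
  have hsum : ∑ σ : Equiv.Perm (Fin n), pdep (permRel t σ) = ∑ _σ : Equiv.Perm (Fin n), 1 := by
    rw [div_eq_one_iff_eq (by positivity)] at h
    simpa [Fintype.card_perm] using h
  have hall := (sum_eq_sum_iff_of_le fun σ _ => pdep_le_one (permRel t σ)).1 hsum
  exact satFD_of_pdep_eq_one t (hall 1 (mem_univ _))

/-- Well-definedness of the measure μ: if the expected probabilistic dependency under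
random (X;Y)-permutations is 1, then the FD X→Y is satisfied. -/
theorem satFD_of_expected_pdep_eq_one {A B : Type*} [DecidableEq A] [DecidableEq B]
    {n : ℕ} (hn : 1 ≤ n) (t : Fin n → A × B)
    (h : (∑ σ : Equiv.Perm (Fin n), pdep (permRel t σ)) / (n.factorial : ℝ) = 1) :
    satFD t :=
  satFD_of_expected_pdep_eq_one_general t h

end AFD
end

section
/- Let t : Fin n → A × B with n ≥ 1 model a bag relation with counts c(a,b). The maximum, over all multiplicity functions m : A × B → ℕ such that m(a,b) ≤ c(a,b) for all (a,b) and such that for each a there is at most one b with m(a,b) > 0, of the total size Σ_{(a,b)} m(a,b), equals Σ_{a ∈ dom_X} max_b c(a,b), where dom_X is the image of i ↦ (t i).1. Consequently g₃(t) := (that maximum)/n = Σ_a p₁(a) · max_b p(b∣a). (Equivalent formula for the measure g₃.) -/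
/-!
A subrelation satisfying X → Y contains, for each X-value `a`, copies of at most one pair
`(a, b)`, hence at most `max_b c(a, b)` tuples with X-value `a`; keeping all copies of `(a, b)`
for a maximizing `b` attains this bound. For the probabilistic form, `p₁(a) · p(b ∣ a) = p(a, b)`
whenever `p₁(a) > 0`, i.e. for `a ∈ dom_X`, and multiplication by `p₁(a) ≥ 0` commutes with
the maximum.
-/

namespace AFD

open Finset

variable {A B : Type*}

section SubrelationSize

variable {α β : Type*}

lemma exists_functional_le_sum_eq_sum_sup (s : Finset α) {u : Finset β} (hu : u.Nonempty)
    (c : α → β → ℕ) :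
    ∃ m : α × β → ℕ, (∀ a b, m (a, b) ≤ c a b) ∧
      (∀ a b b', 0 < m (a, b) → 0 < m (a, b') → b = b') ∧
      ∑ ab ∈ s ×ˢ u, m ab = ∑ a ∈ s, u.sup (c a) := by
  classical
  choose best hbest_mem hbest using fun a => exists_mem_eq_sup u hu (c a)
  refine ⟨fun ab => if ab.2 = best ab.1 then c ab.1 ab.2 else 0, ?_, ?_, ?_⟩
  · intro a b
    dsimp only
    split_ifs <;> simp
  · intro a b b' hb hb'
    simp only at hb hb'
    split_ifs at hb hb' with h h'
    · exact h.trans h'.symm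
    all_goals omega
  · rw [sum_product]
    refine sum_congr rfl fun a _ => ?_
    simp only [sum_ite_eq', hbest_mem, if_true, hbest]

lemma sum_le_sup_of_pos_unique {s : Finset β} {m c : β → ℕ} (hm : ∀ b ∈ s, m b ≤ c b)
    (huniq : ∀ b b', 0 < m b → 0 < m b' → b = b') : ∑ b ∈ s, m b ≤ s.sup c := by
  by_cases hpos : ∃ b ∈ s, 0 < m b
  · obtain ⟨b₀, hb₀, hpos⟩ := hpos
    have hsingle : ∑ b ∈ s, m b = m b₀ :=
      sum_eq_single_of_mem b₀ hb₀ fun b _ hne =>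
        Nat.eq_zero_of_not_pos fun h => hne (huniq b b₀ h hpos)
    rw [hsingle]
    exact (hm b₀ hb₀).trans (le_sup hb₀)
  · push Not at hpos
    rw [sum_eq_zero fun b hb => Nat.le_zero.mp (hpos b hb)]
    exact Nat.zero_le _

theorem isGreatest_sum_functional_le (s : Finset α) {u : Finset β} (hu : u.Nonempty)
    (c : α → β → ℕ) :
    IsGreatest
      {x : ℕ | ∃ m : α × β → ℕ, (∀ a b, m (a, b) ≤ c a b) ∧
        (∀ a b b', 0 < m (a, b) → 0 < m (a, b') → b = b') ∧ x = ∑ ab ∈ s ×ˢ u, m ab}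
      (∑ a ∈ s, u.sup (c a)) := by
  refine ⟨?_, ?_⟩
  · obtain ⟨m, hle, huniq, hsum⟩ := exists_functional_le_sum_eq_sum_sup s hu c
    exact ⟨m, hle, huniq, hsum.symm⟩
  · rintro x ⟨m, hle, huniq, rfl⟩
    rw [sum_product]
    exact sum_le_sum fun a _ =>
      sum_le_sup_of_pos_unique (fun b _ => hle a b) fun b b' => huniq a b b'

end SubrelationSize

section Counts

variable {A B : Type*} [DecidableEq A] [DecidableEq B] {n : ℕ}

lemma mem_domXY_of_cnt_pos (t : Fin n → A × B) {a : A} {b : B} (h : 0 < cnt t a b) :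
    (a, b) ∈ domXY t := by
  obtain ⟨i, hi⟩ := card_pos.mp h
  exact (mem_filter.mp hi).2 ▸ mem_image_of_mem t (mem_univ i)

lemma domXY_subset_product (t : Fin n → A × B) : domXY t ⊆ domX t ×ˢ domY t := by
  simp only [subset_iff, domXY, domX, domY, mem_image, mem_product, mem_univ, true_and]
  rintro _ ⟨i, rfl⟩
  exact ⟨⟨i, rfl⟩, ⟨i, rfl⟩⟩

lemma sum_domXY_eq_sum_product (t : Fin n → A × B) {m : A × B → ℕ}
    (hm : ∀ a b, m (a, b) ≤ cnt t a b) :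
    ∑ ab ∈ domXY t, m ab = ∑ ab ∈ domX t ×ˢ domY t, m ab := by
  refine sum_subset (domXY_subset_product t) fun ab _ hab => ?_
  by_contra hne
  exact hab (mem_domXY_of_cnt_pos t ((Nat.pos_of_ne_zero hne).trans_le (hm ab.1 ab.2)))

omit [DecidableEq B] in
lemma c1_pos_of_mem_domX (t : Fin n → A × B) {a : A} (ha : a ∈ domX t) : 0 < c1 t a := by
  obtain ⟨i, -, hi⟩ := mem_image.mp ha
  exact card_pos.mpr ⟨i, mem_filter.mpr ⟨mem_univ i, hi⟩⟩

omit [DecidableEq B] in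
lemma p1_pos_of_mem_domX (t : Fin n → A × B) {a : A} (ha : a ∈ domX t) : 0 < p1 t a := by
  obtain ⟨i, -, -⟩ := mem_image.mp ha
  exact div_pos (Nat.cast_pos.mpr (c1_pos_of_mem_domX t ha)) (Nat.cast_pos.mpr i.pos)

lemma p1_mul_sup'_pC (t : Fin n → A × B) {a : A} (ha : a ∈ domX t) (hY : (domY t).Nonempty) :
    p1 t a * (domY t).sup' hY (fun b => pC t a b) =
      (((domY t).sup fun b => cnt t a b : ℕ) : ℝ) / n := by
  have hp1 := p1_pos_of_mem_domX t ha
  calc p1 t a * (domY t).sup' hY (fun b => pC t a b)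
      = (domY t).sup' hY (fun b => p1 t a * pC t a b) := mul₀_sup' hp1.le _ _ hY
    _ = (domY t).sup' hY (fun b => (cnt t a b : ℝ) / n) := by
        simp only [pC, pJ, mul_div_cancel₀ _ hp1.ne']
    _ = (((domY t).sup fun b => cnt t a b : ℕ) : ℝ) / n := by
        rw [← sup'_div₀ (Nat.cast_nonneg n), ← Nat.cast_finsetSup', sup'_eq_sup]

end Counts

/-- Equivalent formula for the measure g₃: the maximum size of a subrelation satisfying
the FD X→Y equals `∑_{a ∈ dom_X} max_b c(a,b)`, and consequently
`g₃(t) = ∑_a p₁(a) · max_b p(b∣a)`. -/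
theorem g3_eq_sum_sup {A B : Type*} [DecidableEq A] [DecidableEq B]
    {n : ℕ} (hn : 1 ≤ n) (t : Fin n → A × B) :
    IsGreatest
      {s : ℕ | ∃ m : A × B → ℕ,
        (∀ a b, m (a, b) ≤ cnt t a b) ∧
        (∀ a b b', 0 < m (a, b) → 0 < m (a, b') → b = b') ∧
        s = ∑ ab ∈ domXY t, m ab}
      (∑ a ∈ domX t, (domY t).sup fun b => cnt t a b) ∧
    ((∑ a ∈ domX t, (domY t).sup fun b => cnt t a b : ℕ) : ℝ) / n =
      ∑ a ∈ domX t, p1 t a *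
        (domY t).sup'
          ⟨(t ⟨0, hn⟩).2, by exact Finset.mem_image_of_mem _ (Finset.mem_univ _)⟩
          (fun b => pC t a b) := by
  have hY : (domY t).Nonempty := ⟨(t ⟨0, hn⟩).2, mem_image_of_mem _ (mem_univ _)⟩
  refine ⟨?_, ?_⟩
  · convert isGreatest_sum_functional_le (domX t) hY (cnt t) using 1
    ext s
    exact exists_congr fun m => and_congr_right fun hm => by
      rw [sum_domXY_eq_sum_product t hm]
  · rw [Nat.cast_sum, sum_div]
    exact sum_congr rfl fun a ha => (p1_mul_sup'_pC t ha hY).symm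

end AFD
end

section
/- Let t : Fin n → A × B with n ≥ 1 model a bag relation. Then the number of violating pairs (i,j) ∈ Fin n × Fin n — pairs with (t i).1 = (t j).1 and (t i).2 ≠ (t j).2 — divided by n², equals the logical conditional entropy h(Y∣X) := Σ_{(a,b)} p(a,b)·(p₁(a) − p(a,b)), where (a,b) ranges over the image of t. (Identity g₁ = 1 − h_R(Y∣X): the fraction of violating pairs equals the logical conditional entropy.) -/
namespace AFD

open Finset

variable {A B : Type*}

/-- The fraction of violating pairs equals the logical conditional entropy `h(Y∣X)`
(identity `g₁ = 1 − h_R(Y∣X)`). -/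
theorem violating_pairs_fraction_eq_logical_conditional_entropy
    {A B : Type*} [DecidableEq A] [DecidableEq B]
    {n : ℕ} (hn : 1 ≤ n) (t : Fin n → A × B) :
    ((Finset.univ.filter fun ij : Fin n × Fin n =>
        (t ij.1).1 = (t ij.2).1 ∧ (t ij.1).2 ≠ (t ij.2).2).card : ℝ) / (n : ℝ) ^ 2 =
      ∑ ab ∈ domXY t, pJ t ab.1 ab.2 * (p1 t ab.1 - pJ t ab.1 ab.2) := by
  classical
  have hn' : (n : ℝ) ≠ 0 := by
    have : 0 < n := hn
    exact_mod_cast this.ne'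
  -- row lemma: for fixed i, the count of violating partners equals c1 - cnt
  have row : ∀ i : Fin n,
      ((Finset.univ.filter fun j => (t i).1 = (t j).1 ∧ (t i).2 ≠ (t j).2).card : ℝ)
        = (c1 t (t i).1 : ℝ) - (cnt t (t i).1 (t i).2 : ℝ) := by
    intro i
    have h : (Finset.univ.filter fun j => (t i).1 = (t j).1 ∧ (t i).2 ≠ (t j).2).card
        + cnt t (t i).1 (t i).2 = c1 t (t i).1 := by
      rw [cnt, c1, ← Finset.card_union_of_disjoint]
      · congr 1
        ext j
        simp only [Finset.mem_union, Finset.mem_filter, Finset.mem_univ, true_and,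
          Prod.ext_iff]
        constructor
        · rintro (⟨h1, _⟩ | ⟨h1, _⟩)
          · exact h1.symm
          · exact h1
        · intro h1
          by_cases h2 : (t i).2 = (t j).2
          · exact Or.inr ⟨h1, h2.symm⟩
          · exact Or.inl ⟨h1.symm, h2⟩
      · rw [Finset.disjoint_filter]
        intro j _ hp hq
        exact hp.2 (by rw [hq])
    have := congrArg (fun m : ℕ => (m : ℝ)) h
    push_cast at this
    linarith
  -- turn the pair count into a sum over i of row counts
  have hcard : ((Finset.univ.filter fun ij : Fin n × Fin n =>
      (t ij.1).1 = (t ij.2).1 ∧ (t ij.1).2 ≠ (t ij.2).2).card : ℝ)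
      = ∑ i : Fin n, ((c1 t (t i).1 : ℝ) - (cnt t (t i).1 (t i).2 : ℝ)) := by
    have h1 : (Finset.univ.filter fun ij : Fin n × Fin n =>
        (t ij.1).1 = (t ij.2).1 ∧ (t ij.1).2 ≠ (t ij.2).2).card
        = ∑ i : Fin n, (Finset.univ.filter fun j =>
            (t i).1 = (t j).1 ∧ (t i).2 ≠ (t j).2).card := by
      rw [Finset.card_filter, Fintype.sum_prod_type]
      exact Finset.sum_congr rfl fun i _ => (Finset.card_filter _ _).symm
    rw [h1]
    push_cast
    exact Finset.sum_congr rfl fun i _ => row i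
  -- rewrite RHS
  have hRHS : ∑ ab ∈ domXY t, pJ t ab.1 ab.2 * (p1 t ab.1 - pJ t ab.1 ab.2)
      = (∑ ab ∈ domXY t, (cnt t ab.1 ab.2 : ℝ) * ((c1 t ab.1 : ℝ) - (cnt t ab.1 ab.2 : ℝ)))
        / (n : ℝ) ^ 2 := by
    rw [Finset.sum_div]
    refine Finset.sum_congr rfl fun ab _ => ?_
    simp only [pJ, p1, div_sub_div_same, div_mul_div_comm]
    rw [sq]
  -- the grouped sum equals the sum over indices
  have hgroup : ∑ ab ∈ domXY t, (cnt t ab.1 ab.2 : ℝ) * ((c1 t ab.1 : ℝ) - (cnt t ab.1 ab.2 : ℝ))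
      = ∑ i : Fin n, ((c1 t (t i).1 : ℝ) - (cnt t (t i).1 (t i).2 : ℝ)) := by
    have hc : ∀ ab : A × B, (cnt t ab.1 ab.2 : ℝ)
        = ∑ i : Fin n, (if t i = ab then (1 : ℝ) else 0) := by
      intro ab
      rw [cnt, Finset.card_filter]
      push_cast
      simp
    calc ∑ ab ∈ domXY t, (cnt t ab.1 ab.2 : ℝ) * ((c1 t ab.1 : ℝ) - (cnt t ab.1 ab.2 : ℝ))
        = ∑ ab ∈ domXY t, ∑ i : Fin n,
            (if t i = ab then ((c1 t ab.1 : ℝ) - (cnt t ab.1 ab.2 : ℝ)) else 0) := by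
          refine Finset.sum_congr rfl fun ab _ => ?_
          rw [hc ab, Finset.sum_mul]
          refine Finset.sum_congr rfl fun i _ => ?_
          by_cases h : t i = ab <;> simp [h]
      _ = ∑ i : Fin n, ∑ ab ∈ domXY t,
            (if t i = ab then ((c1 t ab.1 : ℝ) - (cnt t ab.1 ab.2 : ℝ)) else 0) :=
          Finset.sum_comm
      _ = ∑ i : Fin n, ((c1 t (t i).1 : ℝ) - (cnt t (t i).1 (t i).2 : ℝ)) := by
          refine Finset.sum_congr rfl fun i _ => ?_
          rw [Finset.sum_ite_eq]
          have hmem : t i ∈ domXY t := Finset.mem_image_of_mem t (Finset.mem_univ i)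
          rw [if_pos hmem]
  rw [hcard, hRHS, hgroup]

end AFD
end

section
/- Let t : Fin n → A × B with n ≥ 1 model a bag relation and let K be the number of distinct X-values of t. Then there exists a multiplicity function m : A × B → ℕ with m(a,b) ≤ c(a,b) for all (a,b), with at most one b having m(a,b) > 0 for each a, and with total size Σ_{(a,b)} m(a,b) = K. Consequently g₃(t), the maximum relative size of a subrelation of t satisfying the FD X→Y, satisfies g₃(t) ≥ K/n > 0. (Lower bound on g₃.) -/
namespace AFD

open Finset

variable {A B : Type*}

/-- The measure g₃: the maximum relative size of a subrelation of `t` satisfying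
the FD X→Y, where subrelations are modeled by multiplicity functions `m ≤ c`. -/
noncomputable def g3 {n : ℕ} [DecidableEq A] [DecidableEq B] (t : Fin n → A × B) : ℝ :=
  sSup {s : ℝ | ∃ m : A × B → ℕ,
    (∀ a b, m (a, b) ≤ cnt t a b) ∧
    (∀ a b b', 0 < m (a, b) → 0 < m (a, b') → b = b') ∧
    s = ((∑ ab ∈ domXY t, m ab : ℕ) : ℝ) / n}

variable [DecidableEq A] [DecidableEq B] {n : ℕ} (t : Fin n → A × B)

lemma cnt_pos_of_mem_domXY {a : A} {b : B} (h : (a, b) ∈ domXY t) : 0 < cnt t a b := by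
  obtain ⟨i, -, hi⟩ := mem_image.mp h
  exact card_pos.mpr ⟨i, by simp [hi]⟩

lemma image_fst_domXY : (domXY t).image Prod.fst = domX t := by
  simp only [domXY, domX, image_image, Function.comp_def]

lemma sum_cnt_domXY : ∑ ab ∈ domXY t, cnt t ab.1 ab.2 = n := by
  simpa [cnt, domXY] using (card_eq_sum_card_image t univ).symm

lemma le_g3 (m : A × B → ℕ) (hle : ∀ a b, m (a, b) ≤ cnt t a b)
    (hfd : ∀ a b b', 0 < m (a, b) → 0 < m (a, b') → b = b') :
    ((∑ ab ∈ domXY t, m ab : ℕ) : ℝ) / n ≤ g3 t := by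
  -- The bound `1` makes the set bounded above, so `sSup` is not the junk value `0`.
  refine le_csSup ⟨1, ?_⟩ ⟨m, hle, hfd, rfl⟩
  rintro _ ⟨m', hle', -, rfl⟩
  have hsum : ∑ ab ∈ domXY t, m' ab ≤ n :=
    (sum_le_sum fun ab _ => hle' ab.1 ab.2).trans_eq (sum_cnt_domXY t)
  exact div_le_one_of_le₀ (by exact_mod_cast hsum) n.cast_nonneg

lemma exists_section_domXY :
    ∃ S ⊆ domXY t, Set.InjOn Prod.fst (S : Set (A × B)) ∧ #S = #(domX t) := by
  obtain ⟨S, hS, hinj, himg⟩ := exists_subset_injOn_image_eq_of_surjOn (f := Prod.fst)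
    (domXY t : Set (A × B)) (domX t)
    (by rw [← image_fst_domXY, coe_image]; exact Set.surjOn_image _ _)
  exact ⟨S, coe_subset.mp hS, hinj, by rw [← himg, card_image_of_injOn hinj]⟩

lemma exists_fd_submultiplicity_sum_eq_card_domX :
    ∃ m : A × B → ℕ, (∀ a b, m (a, b) ≤ cnt t a b) ∧
      (∀ a b b', 0 < m (a, b) → 0 < m (a, b') → b = b') ∧
      ∑ ab ∈ domXY t, m ab = #(domX t) := by
  obtain ⟨S, hS, hinj, hcard⟩ := exists_section_domXY t
  refine ⟨fun ab => if ab ∈ S then 1 else 0, fun a b => ?_, fun a b b' hb hb' => ?_, ?_⟩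
  · dsimp only
    split_ifs with h
    exacts [cnt_pos_of_mem_domXY t (hS h), zero_le]
  · simp only [pos_iff_ne_zero, ne_eq, ite_eq_right_iff, one_ne_zero, imp_false, not_not] at hb hb'
    exact congrArg Prod.snd (hinj hb hb' rfl)
  · rw [sum_boole, Nat.cast_id, filter_mem_eq_inter, inter_eq_right.mpr hS, hcard]

omit [DecidableEq B] in
lemma card_domX_pos (hn : 0 < n) : 0 < #(domX t) :=
  card_pos.mpr ((univ_nonempty_iff.mpr ⟨⟨0, hn⟩⟩).image _)

/-- Lower bound on g₃: there is a subrelation satisfying X→Y of size `K`, the number of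
distinct X-values, hence `g₃(t) ≥ K/n > 0`. -/
theorem g3_lower_bound {A B : Type*} [DecidableEq A] [DecidableEq B]
    {n : ℕ} (hn : 1 ≤ n) (t : Fin n → A × B) :
    (∃ m : A × B → ℕ,
      (∀ a b, m (a, b) ≤ cnt t a b) ∧
      (∀ a b b', 0 < m (a, b) → 0 < m (a, b') → b = b') ∧
      (∑ ab ∈ domXY t, m ab) = (domX t).card) ∧
    ((domX t).card : ℝ) / n ≤ g3 t ∧ 0 < ((domX t).card : ℝ) / n := by
  obtain ⟨m, hle, hfd, hsum⟩ := exists_fd_submultiplicity_sum_eq_card_domX t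
  refine ⟨⟨m, hle, hfd, hsum⟩, ?_, ?_⟩
  · simpa only [hsum] using le_g3 t m hle hfd
  · exact div_pos (by exact_mod_cast card_domX_pos t hn) (by exact_mod_cast hn)

end AFD
end

section
/- Let t : Fin n → A × B with n ≥ 1 model a bag relation, let dom_X be the image of i ↦ (t i).1 and dom_XY the image of t. Then |dom_X| ≤ |dom_XY|, and |dom_X| = |dom_XY| if and only if t satisfies the FD X→Y. (The co-occurrence ratio ρ := |dom_X|/|dom_XY| is at most 1, with value 1 exactly when the FD holds.) -/
namespace AFD

open Finset

variable {A B : Type*}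

theorem domX_eq_image_fst {n : ℕ} [DecidableEq A] [DecidableEq B] (t : Fin n → A × B) :
    domX t = (domXY t).image Prod.fst := by
  rw [domX, domXY, image_image]
  rfl

theorem satFD_iff_injOn_fst {n : ℕ} [DecidableEq A] [DecidableEq B] (t : Fin n → A × B) :
    satFD t ↔ Set.InjOn Prod.fst (domXY t : Set (A × B)) := by
  simp only [domXY, coe_image, coe_univ, Set.image_univ, Set.InjOn, Set.forall_mem_range,
    Prod.ext_iff, satFD]
  exact forall₂_congr fun i j => ⟨fun h hfst => ⟨hfst, h hfst⟩, fun h hfst => (h hfst).2⟩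

theorem domX_card_le_domXY_card_iff_general {A B : Type*} [DecidableEq A] [DecidableEq B]
    {n : ℕ} (t : Fin n → A × B) :
    (domX t).card ≤ (domXY t).card ∧
    ((domX t).card = (domXY t).card ↔ satFD t) := by
  rw [domX_eq_image_fst, satFD_iff_injOn_fst]
  exact ⟨card_image_le, card_image_iff⟩

/-- The co-occurrence ratio ρ := |dom_X|/|dom_XY| is at most 1, with value 1 exactly
when the FD X→Y holds: `|dom_X| ≤ |dom_XY|`, with equality iff the FD holds. -/
theorem domX_card_le_domXY_card_iff {A B : Type*} [DecidableEq A] [DecidableEq B]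
    {n : ℕ} (hn : 1 ≤ n) (t : Fin n → A × B) :
    (domX t).card ≤ (domXY t).card ∧
    ((domX t).card = (domXY t).card ↔ satFD t) :=
  domX_card_le_domXY_card_iff_general t

end AFD
end

section
/- Let t : Fin n → A × B with n ≥ 1 model a bag relation. The logical conditional entropy h(Y∣X) := Σ_{(a,b)} p(a,b)·(p₁(a) − p(a,b)) (sum over the image of t) is zero if and only if t satisfies the FD X→Y. -/
namespace AFD

open Finset

variable {A B : Type*}

/-- The logical conditional entropy `h(Y∣X)` is zero iff `t` satisfies the FD X→Y. -/
theorem logical_conditional_entropy_eq_zero_iff_satFD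
    {A B : Type*} [DecidableEq A] [DecidableEq B]
    {n : ℕ} (hn : 1 ≤ n) (t : Fin n → A × B) :
    (∑ ab ∈ domXY t, pJ t ab.1 ab.2 * (p1 t ab.1 - pJ t ab.1 ab.2)) = 0 ↔
      satFD t := by
  have hnpos : (0:ℝ) < n := by exact_mod_cast hn
  have hsub : ∀ a b, (Finset.univ.filter fun i => t i = (a, b)) ⊆
      (Finset.univ.filter fun i => (t i).1 = a) := by
    intro a b i hi
    simp only [Finset.mem_filter] at *
    exact ⟨hi.1, by rw [hi.2]⟩
  have hle : ∀ a b, cnt t a b ≤ c1 t a := fun a b => Finset.card_le_card (hsub a b)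
  have hnonneg : ∀ ab ∈ domXY t, 0 ≤ pJ t ab.1 ab.2 * (p1 t ab.1 - pJ t ab.1 ab.2) := by
    intro ab _
    apply mul_nonneg
    · exact div_nonneg (Nat.cast_nonneg _) (le_of_lt hnpos)
    · apply sub_nonneg.mpr
      have : (cnt t ab.1 ab.2 : ℝ) ≤ (c1 t ab.1 : ℝ) := by exact_mod_cast hle ab.1 ab.2
      exact div_le_div_of_nonneg_right this hnpos.le
  rw [Finset.sum_eq_zero_iff_of_nonneg hnonneg]
  constructor
  · intro h i j hij
    -- t i ∈ domXY
    have hmem : t i ∈ domXY t := Finset.mem_image_of_mem t (Finset.mem_univ i)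
    have := h (t i) hmem
    have hpos : (0:ℝ) < pJ t (t i).1 (t i).2 := by
      apply div_pos _ hnpos
      have : i ∈ (Finset.univ.filter fun k => t k = ((t i).1, (t i).2)) := by
        simp
      have hc : 0 < cnt t (t i).1 (t i).2 := Finset.card_pos.mpr ⟨i, this⟩
      exact_mod_cast hc
    have heq : p1 t (t i).1 = pJ t (t i).1 (t i).2 := by
      rcases mul_eq_zero.mp this with h1 | h2
      · exact absurd h1 (ne_of_gt hpos)
      · linarith [sub_eq_zero.mp h2]
    have hcard : c1 t (t i).1 = cnt t (t i).1 (t i).2 := by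
      have := heq
      unfold p1 pJ at this
      field_simp at this
      exact_mod_cast this
    -- filters equal
    have hfeq : (Finset.univ.filter fun k => (t k).1 = (t i).1) =
        (Finset.univ.filter fun k => t k = ((t i).1, (t i).2)) := by
      apply (Finset.eq_of_subset_of_card_le (hsub _ _) (le_of_eq hcard)).symm
    have hj : j ∈ (Finset.univ.filter fun k => (t k).1 = (t i).1) := by
      simp [hij.symm]
    rw [hfeq] at hj
    simp only [Finset.mem_filter] at hj
    rw [hj.2]
  · intro hfd ab hab
    rcases Finset.mem_image.mp hab with ⟨i, _, hi⟩
    have hfeq : (Finset.univ.filter fun k => (t k).1 = ab.1) =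
        (Finset.univ.filter fun k => t k = (ab.1, ab.2)) := by
      ext k
      simp only [Finset.mem_filter, Finset.mem_univ, true_and]
      constructor
      · intro hk
        have h2 := hfd k i (by rw [hk, ← hi])
        have : t k = ((t k).1, (t k).2) := rfl
        rw [this, hk, h2, ← hi]
      · intro hk; rw [hk]
    have : c1 t ab.1 = cnt t ab.1 ab.2 := by
      unfold c1 cnt; rw [hfeq]
    have : p1 t ab.1 - pJ t ab.1 ab.2 = 0 := by
      unfold p1 pJ; rw [this]; ring
    rw [this, mul_zero]

end AFD
end
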